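/- If r ≥ 2 and (a_j : 0 ≤ j ≤ 2^s) is a sequence of complex numbers, then V_r(a_j : 0 ≤ j ≤ 2^s) ≤ √2 · ∑_{i=0}^{s} (∑_{j=0}^{2^{s-i}-1} |a_{(j+1)2^i} - a_{j 2^i}|^2)^{1/2}. -/

import Mathlib

open scoped ENNReal

/-- The `r`-variational seminorm of a sequence `a` indexed by a subset `A ⊆ ℕ`. -/
noncomputable def variationSeminorm (r : ℝ) (a : ℕ → ℂ) (A : Set ℕ) : ℝ≥0∞ :=
  ⨆ (J : ℕ) (k : Fin (J + 1) → ℕ) (_ : StrictMono k) (_ : ∀ j, k j ∈ A),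
    (∑ j : Fin J, ENNReal.ofReal (‖a (k j.succ) - a (k j.castSucc)‖ ^ r)) ^ (1 / r)

/-!
For `r ≥ 2` the `ℓ^r` norm of the jumps is at most their `ℓ^2` norm, so it suffices to bound
`(∑ ‖a (m j) - a (n j)‖²)^(1/2)` for every family of pairwise disjoint intervals
`[n j, m j) ⊆ [0, 2^s)`. Induct on `s`: round `n j` up and `m j` down to even numbers. The middle
pieces form such a family for `t ↦ a (2 t)` on `[0, 2^(s-1)]`, which carries the scales `i ≥ 1`.
The end pieces are unit steps lying in disjoint intervals, so their squares add up to at most the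
square of the scale-`0` square function, and `√x + √y ≤ √2 √(x + y)` produces the factor `√2`.
-/

open Finset

namespace ENNReal

variable {ι : Type*} (s : Finset ι) (f : ι → ℝ≥0∞)

theorem sum_rpow_le_rpow_sum {p : ℝ} (hp : 1 ≤ p) : ∑ i ∈ s, f i ^ p ≤ (∑ i ∈ s, f i) ^ p := by
  classical
  induction s using Finset.induction_on with
  | empty => simp [zero_rpow_of_pos (zero_lt_one.trans_le hp)]
  | insert i s hi ih =>
    rw [sum_insert hi, sum_insert hi]
    exact (add_le_add_right ih _).trans (add_rpow_le_rpow_add _ _ hp)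

theorem Lq_le_Lp {p q : ℝ} (hp : 0 < p) (hpq : p ≤ q) :
    (∑ i ∈ s, f i ^ q) ^ (1 / q) ≤ (∑ i ∈ s, f i ^ p) ^ (1 / p) := by
  have hq : 0 < q := hp.trans_le hpq
  calc (∑ i ∈ s, f i ^ q) ^ (1 / q) = (∑ i ∈ s, (f i ^ p) ^ (q / p)) ^ (1 / q) := by
        simp_rw [← rpow_mul, mul_div_cancel₀ q hp.ne']
    _ ≤ ((∑ i ∈ s, f i ^ p) ^ (q / p)) ^ (1 / q) :=
        rpow_le_rpow (sum_rpow_le_rpow_sum s _ ((one_le_div hp).2 hpq)) (by positivity)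
    _ = (∑ i ∈ s, f i ^ p) ^ (1 / p) := by
        rw [← rpow_mul]
        congr 1
        field_simp

theorem Lp_le_of_le_add_add {p : ℝ} (hp : 1 ≤ p) {u v w : ι → ℝ≥0∞}
    (h : ∀ i ∈ s, f i ≤ u i + v i + w i) :
    (∑ i ∈ s, f i ^ p) ^ (1 / p) ≤
      (∑ i ∈ s, u i ^ p) ^ (1 / p) + (∑ i ∈ s, v i ^ p) ^ (1 / p) +
        (∑ i ∈ s, w i ^ p) ^ (1 / p) := by
  have hp0 : 0 < p := zero_lt_one.trans_le hp
  calc (∑ i ∈ s, f i ^ p) ^ (1 / p) ≤ (∑ i ∈ s, (u i + v i + w i) ^ p) ^ (1 / p) :=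
        rpow_le_rpow (sum_le_sum fun i hi => rpow_le_rpow (h i hi) hp0.le) (by positivity)
    _ ≤ _ := (Lp_add_le s _ _ hp).trans (add_le_add_left (Lp_add_le s _ _ hp) _)

theorem ofReal_sqrt_two : ENNReal.ofReal √2 = 2 ^ (1 / 2 : ℝ) := by
  rw [Real.sqrt_eq_rpow, ← ofReal_rpow_of_pos two_pos, ofReal_ofNat]

theorem rpow_half_add_rpow_half_le (x y : ℝ≥0∞) :
    x ^ (1 / 2 : ℝ) + y ^ (1 / 2 : ℝ) ≤ ENNReal.ofReal √2 * (x + y) ^ (1 / 2 : ℝ) := by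
  have hsq : ∀ z : ℝ≥0∞, (z ^ (1 / 2 : ℝ)) ^ (2 : ℝ) = z := fun z => by
    rw [← rpow_mul]; norm_num
  have key := rpow_add_le_mul_rpow_add_rpow (x ^ (1 / 2 : ℝ)) (y ^ (1 / 2 : ℝ)) one_le_two
  rw [hsq, hsq] at key
  calc x ^ (1 / 2 : ℝ) + y ^ (1 / 2 : ℝ)
      = ((x ^ (1 / 2 : ℝ) + y ^ (1 / 2 : ℝ)) ^ (2 : ℝ)) ^ (1 / 2 : ℝ) := by
        rw [← rpow_mul]; norm_num
    _ ≤ (2 ^ (2 - 1 : ℝ) * (x + y)) ^ (1 / 2 : ℝ) := rpow_le_rpow key (by norm_num)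
    _ = ENNReal.ofReal √2 * (x + y) ^ (1 / 2 : ℝ) := by
        rw [mul_rpow_of_nonneg _ _ (by norm_num), ofReal_sqrt_two]
        norm_num

end ENNReal

theorem Monotone.pairwiseDisjoint_Ico_castSucc_succ {J : ℕ} {k : Fin (J + 1) → ℕ}
    (hk : Monotone k) :
    ((univ : Finset (Fin J)) : Set (Fin J)).PairwiseDisjoint
      fun j => Ico (k j.castSucc) (k j.succ) := by
  refine Pairwise.set_pairwise ((pairwise_disjoint_on _).2 fun i j hij => ?_) _
  have := hk (Fin.succ_le_castSucc_iff.2 hij)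
  exact disjoint_left.2 fun t hi hj => by simp only [mem_Ico] at hi hj; omega

theorem sum_sum_Ico_le_sum_range {ι M : Type*} [AddCommMonoid M] [PartialOrder M]
    [CanonicallyOrderedAdd M] (g : ℕ → M) {S : Finset ι} {n m : ι → ℕ} {N : ℕ}
    (hm : ∀ j ∈ S, m j ≤ N) (hdisj : (S : Set ι).PairwiseDisjoint fun j => Ico (n j) (m j)) :
    ∑ j ∈ S, ∑ t ∈ Ico (n j) (m j), g t ≤ ∑ t ∈ range N, g t := by
  classical
  rw [← sum_biUnion hdisj]
  refine sum_le_sum_of_subset (biUnion_subset.2 fun j hj t ht => ?_)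
  simp only [mem_Ico, mem_range] at ht ⊢
  exact ht.2.trans_le (hm j hj)

theorem pairwiseDisjoint_Ico_half {ι : Type*} {S : Set ι} {n m : ι → ℕ}
    (hdisj : S.PairwiseDisjoint fun j => Ico (n j) (m j)) :
    S.PairwiseDisjoint fun j => Ico ((n j + 1) / 2) (m j / 2) := by
  intro i hi j hj hij
  refine disjoint_left.2 fun t hti htj => disjoint_left.1 (hdisj hi hj hij)
    (show 2 * t ∈ Ico (n i) (m i) from ?_) ?_ <;>
    simp only [mem_Ico] at hti htj ⊢ <;> omega

section Dyadic

variable {X : Type*} [PseudoEMetricSpace X]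

noncomputable def dyadicSquareFunction (a : ℕ → X) (s i : ℕ) : ℝ≥0∞ :=
  (∑ j ∈ range (2 ^ (s - i)), edist (a ((j + 1) * 2 ^ i)) (a (j * 2 ^ i)) ^ (2 : ℝ)) ^ (1 / 2 : ℝ)

theorem dyadicSquareFunction_zero (a : ℕ → X) (s : ℕ) :
    dyadicSquareFunction a s 0 =
      (∑ t ∈ range (2 ^ s), edist (a (t + 1)) (a t) ^ (2 : ℝ)) ^ (1 / 2 : ℝ) := by
  simp [dyadicSquareFunction]

theorem dyadicSquareFunction_comp_two_mul (a : ℕ → X) (s i : ℕ) :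
    dyadicSquareFunction (fun t => a (2 * t)) s i = dyadicSquareFunction a (s + 1) (i + 1) := by
  simp only [dyadicSquareFunction, Nat.add_sub_add_right, pow_succ, ← mul_assoc, mul_comm 2]

theorem edist_rpow_eq_sum_Ico_of_le_succ (a : ℕ → X) {p q : ℕ} (hpq : p ≤ q) (hq : q ≤ p + 1)
    {r : ℝ} (hr : 0 < r) :
    edist (a q) (a p) ^ r = ∑ t ∈ Ico p q, edist (a (t + 1)) (a t) ^ r := by
  obtain rfl | rfl : q = p ∨ q = p + 1 := by omega
  · simp [hr]
  · simp

theorem sum_edist_rpow_ends_le (a : ℕ → X) {r : ℝ} (hr : 0 < r) {ι : Type*} {S : Finset ι}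
    {n m : ι → ℕ} {N : ℕ} (hnm : ∀ j ∈ S, n j < m j) (hm : ∀ j ∈ S, m j ≤ N)
    (hdisj : (S : Set ι).PairwiseDisjoint fun j => Ico (n j) (m j)) :
    ∑ j ∈ S, (edist (a (m j)) (a (2 * (m j / 2))) ^ r +
        edist (a (2 * ((n j + 1) / 2))) (a (n j)) ^ r) ≤
      ∑ t ∈ range N, edist (a (t + 1)) (a t) ^ r := by
  refine (sum_le_sum fun j hj => ?_).trans (sum_sum_Ico_le_sum_range _ hm hdisj)
  have hj := hnm j hj
  rw [edist_rpow_eq_sum_Ico_of_le_succ a (by omega) (by omega) hr,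
    edist_rpow_eq_sum_Ico_of_le_succ a (by omega) (by omega) hr, add_comm,
    ← sum_Ico_consecutive _ (show n j ≤ 2 * ((n j + 1) / 2) by omega)
      (show 2 * ((n j + 1) / 2) ≤ m j by omega),
    ← sum_Ico_consecutive _ (show 2 * ((n j + 1) / 2) ≤ 2 * (m j / 2) by omega)
      (show 2 * (m j / 2) ≤ m j by omega)]
  gcongr
  exact le_add_self

theorem rpow_half_sum_edist_sq_le_dyadic (s : ℕ) (a : ℕ → X) {ι : Type*} (S : Finset ι)
    (n m : ι → ℕ) (hnm : ∀ j ∈ S, n j ≤ m j) (hm : ∀ j ∈ S, m j ≤ 2 ^ s)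
    (hdisj : (S : Set ι).PairwiseDisjoint fun j => Ico (n j) (m j)) :
    (∑ j ∈ S, edist (a (m j)) (a (n j)) ^ (2 : ℝ)) ^ (1 / 2 : ℝ) ≤
      ENNReal.ofReal √2 * ∑ i ∈ range (s + 1), dyadicSquareFunction a s i := by
  induction s generalizing a S n m with
  | zero =>
    have hsum : ∑ j ∈ S, edist (a (m j)) (a (n j)) ^ (2 : ℝ) ≤
        ∑ t ∈ range (2 ^ 0), edist (a (t + 1)) (a t) ^ (2 : ℝ) := by
      refine (sum_congr rfl fun j hj => ?_).trans_le (sum_sum_Ico_le_sum_range _ hm hdisj)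
      have := hm j hj
      exact edist_rpow_eq_sum_Ico_of_le_succ a (hnm j hj) (by simp at this; omega) two_pos
    calc _ ≤ dyadicSquareFunction a 0 0 := by
          rw [dyadicSquareFunction_zero]; exact ENNReal.rpow_le_rpow hsum (by norm_num)
      _ ≤ _ := by
          rw [sum_range_one]
          exact le_mul_of_one_le_left' (ENNReal.one_le_ofReal.2 Real.one_lt_sqrt_two.le)
  | succ s ih =>
    classical
    -- Dropping the empty intervals guarantees `2 * ((n j + 1) / 2) ≤ 2 * (m j / 2)`, which fails for
    -- `n j = m j` odd.
    set S' := S.filter fun j => n j < m j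
    have hS' : ∑ j ∈ S', edist (a (m j)) (a (n j)) ^ (2 : ℝ) =
        ∑ j ∈ S, edist (a (m j)) (a (n j)) ^ (2 : ℝ) :=
      sum_filter_of_ne fun j hj hne => (hnm j hj).lt_of_ne fun h => hne (by simp [h])
    have hends := sum_edist_rpow_ends_le a two_pos (S := S') (n := n) (m := m)
      (fun j hj => (mem_filter.1 hj).2) (fun j hj => hm j (mem_filter.1 hj).1)
      (hdisj.subset (coe_subset.2 (filter_subset _ _)))
    have hcoarse := ih (fun t => a (2 * t)) S' (fun j => (n j + 1) / 2) (fun j => m j / 2)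
      (fun j hj => by have := (mem_filter.1 hj).2; omega)
      (fun j hj => by have := hm j (mem_filter.1 hj).1; rw [pow_succ] at this; omega)
      (pairwiseDisjoint_Ico_half (hdisj.subset (coe_subset.2 (filter_subset _ _))))
    rw [← hS']
    -- Each jump is split at the even points `2 * ((n j + 1) / 2) ≤ 2 * (m j / 2)`.
    calc _ ≤ _ := ENNReal.Lp_le_of_le_add_add S' _ one_le_two fun j _ => edist_triangle4 _ _ _ _
      _ = _ := add_right_comm _ _ _
      _ ≤ ENNReal.ofReal √2 * dyadicSquareFunction a (s + 1) 0 +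
          ENNReal.ofReal √2 *
            ∑ i ∈ range (s + 1), dyadicSquareFunction (fun t => a (2 * t)) s i := by
        refine add_le_add ((ENNReal.rpow_half_add_rpow_half_le _ _).trans ?_) hcoarse
        rw [dyadicSquareFunction_zero, ← sum_add_distrib]
        gcongr
      _ = _ := by
        simp only [dyadicSquareFunction_comp_two_mul]
        rw [sum_range_succ' _ (s + 1), mul_add, add_comm]

end Dyadic

theorem variation_le_sqrt_two_dyadic (r : ℝ) (hr : 2 ≤ r) (s : ℕ) (a : ℕ → ℂ) :
    variationSeminorm r a (Set.Icc 0 (2 ^ s)) ≤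
      ENNReal.ofReal (Real.sqrt 2) *
        ∑ i ∈ Finset.range (s + 1),
          (∑ j ∈ Finset.range (2 ^ (s - i)),
            ENNReal.ofReal (‖a ((j + 1) * 2 ^ i) - a (j * 2 ^ i)‖ ^ 2)) ^ ((1 : ℝ) / 2) := by
  have hedist : ∀ (z w : ℂ) (p : ℝ), 0 ≤ p → ENNReal.ofReal (‖z - w‖ ^ p) = edist z w ^ p :=
    fun z w p hp => by
      rw [edist_dist, dist_eq_norm, ENNReal.ofReal_rpow_of_nonneg (norm_nonneg _) hp]
  have hdyadic : ∀ i, (∑ j ∈ range (2 ^ (s - i)),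
      ENNReal.ofReal (‖a ((j + 1) * 2 ^ i) - a (j * 2 ^ i)‖ ^ 2)) ^ ((1 : ℝ) / 2) =
      dyadicSquareFunction a s i := fun i => by
    simp only [dyadicSquareFunction, ← Real.rpow_two, hedist _ _ 2 two_pos.le]
  simp only [hdyadic]
  refine iSup_le fun J => iSup_le fun k => iSup_le fun hk => iSup_le fun hmem => ?_
  calc _ = (∑ j : Fin J, edist (a (k j.succ)) (a (k j.castSucc)) ^ r) ^ (1 / r) := by
        simp only [hedist _ _ r (by linarith)]
    _ ≤ (∑ j : Fin J, edist (a (k j.succ)) (a (k j.castSucc)) ^ (2 : ℝ)) ^ (1 / 2 : ℝ) :=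
        ENNReal.Lq_le_Lp _ _ two_pos hr
    _ ≤ _ := rpow_half_sum_edist_sq_le_dyadic s a univ _ _
        (fun j _ => hk.monotone j.castSucc_le_succ) (fun j _ => (hmem j.succ).2)
        hk.monotone.pairwiseDisjoint_Ico_castSucc_succ
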